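/- Every trajectory of ξ̇ = X(ξ), with X the guiding vector field for φ(x,y) = x² + y² − R² (γ ∈ {1,−1}, k > 0), starting at a point ξ₀ ≠ (0,0), converges to the circle {φ = 0}: φ(ξ(t)) → 0 as t → ∞. -/

import Mathlib

def phiCircle (R : ℝ) (ξ : ℝ × ℝ) : ℝ := ξ.1 ^ 2 + ξ.2 ^ 2 - R ^ 2

def gradPhiCircle (ξ : ℝ × ℝ) : ℝ × ℝ := (2 * ξ.1, 2 * ξ.2)

def rot90 (v : ℝ × ℝ) : ℝ × ℝ := (-v.2, v.1)

def gvf (R γ k : ℝ) (ξ : ℝ × ℝ) : ℝ × ℝ :=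
  γ • rot90 (gradPhiCircle ξ) - (k * phiCircle R ξ) • gradPhiCircle ξ

theorem gvf_convergence_to_circle (R γ k : ℝ) (hR : 0 < R) (hγ : γ = 1 ∨ γ = -1)
    (hk : 0 < k) (ξ : ℝ → ℝ × ℝ) (hξ : ∀ t, HasDerivAt ξ (gvf R γ k (ξ t)) t)
    (h0 : ξ 0 ≠ 0) :
    Filter.Tendsto (fun t => phiCircle R (ξ t)) Filter.atTop (nhds 0) := by
  classical
  set s : ℝ → ℝ := fun t => (ξ t).1 ^ 2 + (ξ t).2 ^ 2 with hs_def
  -- component derivatives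
  have hx : ∀ t, HasDerivAt (fun t => (ξ t).1) (gvf R γ k (ξ t)).1 t := fun t => by
    simpa using ((hξ t).hasFDerivAt.fst).hasDerivAt
  have hy : ∀ t, HasDerivAt (fun t => (ξ t).2) (gvf R γ k (ξ t)).2 t := fun t => by
    simpa using ((hξ t).hasFDerivAt.snd).hasDerivAt
  have hgvf1 : ∀ p : ℝ × ℝ, (gvf R γ k p).1
      = γ * (-(2 * p.2)) - k * (p.1 ^ 2 + p.2 ^ 2 - R ^ 2) * (2 * p.1) := by
    intro p; simp [gvf, rot90, gradPhiCircle, phiCircle, Prod.smul_def]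
  have hgvf2 : ∀ p : ℝ × ℝ, (gvf R γ k p).2
      = γ * (2 * p.1) - k * (p.1 ^ 2 + p.2 ^ 2 - R ^ 2) * (2 * p.2) := by
    intro p; simp [gvf, rot90, gradPhiCircle, phiCircle, Prod.smul_def]
  -- derivative of s
  have hs' : ∀ t, HasDerivAt s (-4 * k * (s t - R ^ 2) * s t) t := by
    intro t
    have h := ((hx t).pow 2).add ((hy t).pow 2)
    refine h.congr_deriv ?_
    rw [hgvf1, hgvf2]; push_cast; ring
  -- s 0 > 0
  have hs0 : 0 < s 0 := by
    rcases eq_or_ne (ξ 0).1 0 with h1 | h1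
    · have h2 : (ξ 0).2 ≠ 0 := fun h2 => h0 (Prod.ext h1 h2)
      simp only [hs_def]; positivity
    · simp only [hs_def]; positivity
  -- barrier c
  set c : ℝ := min (s 0) (R ^ 2) / 2 with hc_def
  have hc0 : 0 < c := by
    have : 0 < R ^ 2 := by positivity
    simp only [hc_def]; positivity
  have hmin : 0 < min (s 0) (R ^ 2) := lt_min hs0 (by positivity)
  have hchalf : c < min (s 0) (R ^ 2) := by
    simp only [hc_def]; exact half_lt_self hmin
  have hcR : c < R ^ 2 := hchalf.trans_le (min_le_right _ _)
  have hcs0 : c < s 0 := hchalf.trans_le (min_le_left _ _)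
  -- lower bound s t ≥ c for t ≥ 0
  have hlb : ∀ t ≥ (0 : ℝ), c ≤ s t := by
    intro b hb
    have key : ∀ ⦃x⦄, x ∈ Set.Icc (0 : ℝ) b → (fun t => -s t) x ≤ (fun _ : ℝ => -c) x := by
      refine image_le_of_deriv_right_lt_deriv_boundary
        (f' := fun t => -(-4 * k * (s t - R ^ 2) * s t)) (B' := fun _ => 0)
        ?_ ?_ (by simp; linarith) (fun x => hasDerivAt_const x (-c)) ?_
      · exact fun x _ => ((hs' x).neg).continuousAt.continuousWithinAt
      · exact fun x _ => ((hs' x).neg).hasDerivWithinAt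
      · intro x _ hfx
        have hsx : s x = c := by
          have := neg_injective hfx
          linarith [this]
        show -(-4 * k * (s x - R ^ 2) * s x) < 0
        rw [hsx]
        have h6 : 0 < R ^ 2 - c := by linarith
        nlinarith [mul_pos (mul_pos hk h6) hc0]
    have := key (Set.right_mem_Icc.2 hb)
    simpa using this
  -- define u = phi^2 and the exponential bound
  set φ : ℝ → ℝ := fun t => phiCircle R (ξ t) with hφ_def
  have hφs : ∀ t, φ t = s t - R ^ 2 := fun t => rfl
  have hφ' : ∀ t, HasDerivAt φ (-4 * k * φ t * s t) t := fun t =>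
    (hs' t).sub_const (R ^ 2)
  set g : ℝ → ℝ := fun t => (φ t) ^ 2 * Real.exp (8 * k * c * t) with hg_def
  have hg' : ∀ t, HasDerivAt g
      ((2 * φ t * (-4 * k * φ t * s t)) * Real.exp (8 * k * c * t)
        + (φ t) ^ 2 * (Real.exp (8 * k * c * t) * (8 * k * c))) t := by
    intro t
    have h1 : HasDerivAt (fun t => (φ t) ^ 2) (2 * φ t * (-4 * k * φ t * s t)) t := by
      have := (hφ' t).pow 2
      refine this.congr_deriv ?_; push_cast; ring
    have h2 : HasDerivAt (fun t => Real.exp (8 * k * c * t)) (Real.exp (8 * k * c * t) * (8 * k * c)) t := by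
      have hinner : HasDerivAt (fun t : ℝ => 8 * k * c * t) (8 * k * c) t := by
        simpa using (hasDerivAt_id t).const_mul (8 * k * c)
      exact (Real.hasDerivAt_exp (8 * k * c * t)).comp t hinner
    exact h1.mul h2
  have hganti : AntitoneOn g (Set.Ici (0 : ℝ)) := by
    apply antitoneOn_of_deriv_nonpos (convex_Ici 0)
    · exact fun x _ => ((hg' x).continuousAt).continuousWithinAt
    · exact fun x _ => ((hg' x).differentiableAt).differentiableWithinAt
    · intro x hx
      rw [interior_Ici] at hx
      rw [(hg' x).deriv]
      have hcx : c ≤ s x := hlb x (le_of_lt hx)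
      have he : 0 < Real.exp (8 * k * c * x) := Real.exp_pos _
      have h1 : (2 * φ x * (-4 * k * φ x * s x)) * Real.exp (8 * k * c * x)
          + (φ x) ^ 2 * (Real.exp (8 * k * c * x) * (8 * k * c))
          = 8 * k * Real.exp (8 * k * c * x) * (φ x) ^ 2 * (c - s x) := by ring
      rw [h1]
      have : c - s x ≤ 0 := by linarith
      have h2 : 0 ≤ 8 * k * Real.exp (8 * k * c * x) * (φ x) ^ 2 := by positivity
      exact mul_nonpos_of_nonneg_of_nonpos h2 this
  have hbound : ∀ t ≥ (0 : ℝ), (φ t) ^ 2 ≤ (φ 0) ^ 2 * Real.exp (-(8 * k * c * t)) := by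
    intro t ht
    have hgt := hganti (Set.self_mem_Ici) (Set.mem_Ici.2 ht) ht
    have hg0 : g 0 = (φ 0) ^ 2 := by simp [hg_def]
    rw [hg0] at hgt
    have he : 0 < Real.exp (8 * k * c * t) := Real.exp_pos _
    rw [Real.exp_neg]
    calc φ t ^ 2 = (φ t ^ 2 * Real.exp (8 * k * c * t)) * (Real.exp (8 * k * c * t))⁻¹ := by
          field_simp
      _ ≤ φ 0 ^ 2 * (Real.exp (8 * k * c * t))⁻¹ :=
          mul_le_mul_of_nonneg_right hgt (le_of_lt (inv_pos.2 he))
  -- squeeze: φ^2 → 0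
  have hu0 : Filter.Tendsto (fun t => (φ t) ^ 2) Filter.atTop (nhds 0) := by
    have hexp : Filter.Tendsto (fun t : ℝ => (φ 0) ^ 2 * Real.exp (-(8 * k * c * t)))
        Filter.atTop (nhds 0) := by
      have h1 : Filter.Tendsto (fun t : ℝ => (8 * k * c) * t) Filter.atTop Filter.atTop :=
        Filter.Tendsto.const_mul_atTop (by positivity) Filter.tendsto_id
      have h2 := Real.tendsto_exp_neg_atTop_nhds_zero.comp h1
      have h3 : Filter.Tendsto (fun t : ℝ => Real.exp (-(8 * k * c * t)))
          Filter.atTop (nhds 0) := by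
        simpa [Function.comp_def, mul_assoc] using h2
      simpa using h3.const_mul ((φ 0) ^ 2)
    refine squeeze_zero' ?_ ?_ hexp
    · exact Filter.Eventually.of_forall fun t => sq_nonneg _
    · filter_upwards [Filter.eventually_ge_atTop (0:ℝ)] with t ht
      exact hbound t ht
  -- conclude φ → 0
  have habs : Filter.Tendsto (fun t => |φ t|) Filter.atTop (nhds 0) := by
    have := (Real.continuous_sqrt.tendsto 0).comp hu0
    simpa [Function.comp_def, Real.sqrt_sq_eq_abs] using this
  exact tendsto_zero_iff_abs_tendsto_zero _ |>.2 habs
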